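/- arXiv:2507.20298 — 2 statements merged into one kernel-verified Lean document; each statement's English description precedes it below -/
import Mathlib

section
/- Let A(q) = ∏_j f_j^{n_j} =: Σ_{n≥0} a_n q^n be any eta quotient such that n_1 is odd and, for every odd j > 1, the exponent n_j is even. Let S_□ := {k^2 : k ≥ 1} ∪ {2k^2 : k ≥ 1}. (i) For any nonnegative integer N such that a_N is even, or such that N is even and a_N is odd, the cardinality of {(m, s) ∈ ℕ × ℕ : a_m is odd, s ∈ S_□, m + s = N} is even. (ii) For any odd N with a_N odd, the cardinality of {(m, s) ∈ ℕ × ℕ : a_m is odd, s ∈ S_□, m + s = N} is odd. -/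
open PowerSeries Finset

/-- `etaF j` is the formal power series `f_j = ∏_{n=1}^∞ (1 - q^{j n})` in `ℤ⟦q⟧`,
defined through its truncations: for `j ≥ 1` the coefficient of `q^N` in the infinite
product only depends on the (finitely many) factors with `j * n ≤ N`. -/
noncomputable def etaF (j : ℕ) : PowerSeries ℤ :=
  PowerSeries.mk fun N =>
    PowerSeries.coeff N (∏ n ∈ Finset.Icc 1 N, (1 - (PowerSeries.X : PowerSeries ℤ) ^ (j * n)))

lemma constantCoeff_etaF (j : ℕ) : PowerSeries.constantCoeff (etaF j) = 1 := by
  rw [← PowerSeries.coeff_zero_eq_constantCoeff_apply]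
  simp [etaF]

lemma isUnit_etaF (j : ℕ) : IsUnit (etaF j) := by
  rw [PowerSeries.isUnit_iff_constantCoeff, constantCoeff_etaF]
  exact isUnit_one

/-- `etaF j` as a unit of `ℤ⟦q⟧`, so that arbitrary integer powers make sense. -/
noncomputable def etaU (j : ℕ) : (PowerSeries ℤ)ˣ := (isUnit_etaF j).unit

@[simp] lemma etaU_val (j : ℕ) : (etaU j : PowerSeries ℤ) = etaF j := (isUnit_etaF j).unit_spec

/-- The set of positive squares and twice positive squares. -/
def SSq : Set ℕ := {s | ∃ k : ℕ, 1 ≤ k ∧ s = k ^ 2} ∪ {s | ∃ k : ℕ, 1 ≤ k ∧ s = 2 * k ^ 2}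

/-! Taking logarithmic derivatives, `q A'/A = Σ_j n_j · q f_j'/f_j` with
`q f_j'/f_j = -Σ_m (Σ_{d ∣ m, j ∣ d} d) q^m`. Modulo 2 only the term `j = 1` survives: for even `j`
all the divisors `d` involved are even, and for odd `j > 1` the exponent `n_j` is even. Hence
`q A' ≡ A · Σ_m σ(m) q^m (mod 2)`, and `σ(m)` is odd exactly when `m ∈ S_□`, because its parity is
that of the number of divisors of the odd part of `m`. Comparing coefficients of `q^N` gives
`N a_N ≡ #{(m, s) : a_m odd, s ∈ S_□, m + s = N} (mod 2)`. -/

open scoped ArithmeticFunction.sigma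

namespace Nat

theorem isSquare_iff_forall_even_factorization {n : ℕ} (hn : n ≠ 0) :
    IsSquare n ↔ ∀ p, Even (n.factorization p) := by
  refine ⟨?_, fun h => ⟨n.factorization.prod fun p k => p ^ (k / 2), ?_⟩⟩
  · rintro ⟨r, rfl⟩ p
    have hr : r ≠ 0 := by rintro rfl; simp at hn
    simp [Nat.factorization_mul hr hr]
  · rw [← Finsupp.prod_mul]
    conv_lhs => rw [← Nat.prod_factorization_pow_eq_self hn]
    refine Finsupp.prod_congr fun p _ => ?_
    obtain ⟨k, hk⟩ := h p
    rw [← pow_add, hk]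
    congr 1
    omega

theorem odd_card_divisors_iff_isSquare {n : ℕ} (hn : n ≠ 0) :
    Odd #n.divisors ↔ IsSquare n := by
  rw [Nat.card_divisors hn, isSquare_iff_forall_even_factorization hn, ← Nat.not_even_iff_odd,
    even_iff_two_dvd, Nat.prime_two.prime.dvd_finsetProd_iff, not_exists]
  refine forall_congr' fun p => ?_
  by_cases hp : p ∈ n.primeFactors
  · simp [hp, ← even_iff_two_dvd, Nat.even_add_one]
  · have : n.factorization p = 0 := Finsupp.notMem_support_iff.mp (by rwa [support_factorization])
    simp [hp, this]

theorem filter_odd_divisors (n : ℕ) : {d ∈ n.divisors | Odd d} = (ordCompl[2] n).divisors := by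
  rcases eq_or_ne n 0 with rfl | hn
  · simp
  ext d
  simp only [mem_filter, mem_divisors, ne_eq, hn, not_false_eq_true, and_true,
    (Nat.ordCompl_pos 2 hn).ne']
  constructor
  · rintro ⟨hd, hodd⟩
    rw [← Nat.ordProj_mul_ordCompl_eq_self n 2] at hd
    exact (Nat.Coprime.pow_right _ (coprime_two_right.mpr hodd)).dvd_mul_left.mp hd
  · intro hd
    refine ⟨hd.trans (Nat.ordCompl_dvd n 2), Odd.of_dvd_nat ?_ hd⟩
    exact Nat.odd_iff.mpr (Nat.two_dvd_ne_zero.mp (Nat.not_dvd_ordCompl Nat.prime_two hn))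

end Nat

theorem mem_SSq_iff_isSquare_ordCompl {s : ℕ} (hs : s ≠ 0) :
    s ∈ SSq ↔ IsSquare (ordCompl[2] s) := by
  constructor
  · have h2 : ordCompl[2] 2 = 1 := by simpa using Nat.ordCompl_self_pow (k := 1) Nat.prime_two
    rintro (⟨k, -, rfl⟩ | ⟨k, -, rfl⟩) <;> exact ⟨ordCompl[2] k, by simp [Nat.ordCompl_mul, h2, sq]⟩
  · rintro ⟨k, hk⟩
    have hs' := Nat.ordProj_mul_ordCompl_eq_self s 2
    have hk0 : k ≠ 0 := by
      rintro rfl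
      exact (Nat.ordCompl_pos 2 hs).ne' hk
    have hpos (b : ℕ) : 1 ≤ 2 ^ b * k := Nat.one_le_iff_ne_zero.mpr (by positivity)
    rcases Nat.even_or_odd (s.factorization 2) with ⟨b, hb⟩ | ⟨b, hb⟩
    · exact .inl ⟨2 ^ b * k, hpos b, by rw [← hs', hk, hb]; ring⟩
    · exact .inr ⟨2 ^ b * k, hpos b, by rw [← hs', hk, hb]; ring⟩

theorem odd_sigma_one_iff_mem_SSq (s : ℕ) : Odd (σ 1 s) ↔ s ∈ SSq := by
  rcases eq_or_ne s 0 with rfl | hs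
  · simp [SSq, eq_comm (a := 0), Nat.one_le_iff_ne_zero]
  rw [ArithmeticFunction.sigma_one_apply, odd_sum_iff_odd_card_odd, Nat.filter_odd_divisors,
    Nat.odd_card_divisors_iff_isSquare (Nat.ordCompl_pos 2 hs).ne',
    mem_SSq_iff_isSquare_ordCompl hs]

namespace PowerSeries

section CommSemiring

variable {R : Type*} [CommSemiring R]

theorem coeff_X_mul_derivative (f : R⟦X⟧) (n : ℕ) :
    coeff n (X * d⁄dX R f) = n * coeff n f := by
  cases n with
  | zero => simp
  | succ n => rw [coeff_succ_X_mul, coeff_derivative, mul_comm]; push_cast; rfl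

theorem X_pow_dvd_X_mul_derivative {f : R⟦X⟧} {k : ℕ} (h : X ^ k ∣ f) :
    X ^ k ∣ X * d⁄dX R f := by
  rw [X_pow_dvd_iff] at h ⊢
  intro m hm
  rw [coeff_X_mul_derivative, h m hm, mul_zero]

theorem X_mul_derivative_prod {ι : Type*} (s : Finset ι) (g L : ι → R⟦X⟧)
    (h : ∀ i ∈ s, X * d⁄dX R (g i) = g i * L i) :
    X * d⁄dX R (∏ i ∈ s, g i) = (∏ i ∈ s, g i) * ∑ i ∈ s, L i := by
  induction s using Finset.cons_induction with
  | empty => simp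
  | cons a s ha ih =>
    rw [prod_cons, sum_cons, Derivation.leibniz, smul_eq_mul, smul_eq_mul, mul_add,
      mul_left_comm X (g a), mul_left_comm X (∏ i ∈ s, g i),
      ih fun i hi => h i (mem_cons_of_mem hi), h a (mem_cons_self a s)]
    ring

noncomputable def qLogDeriv (u : R⟦X⟧ˣ) : R⟦X⟧ := (↑u⁻¹ : R⟦X⟧) * (X * d⁄dX R (u : R⟦X⟧))

theorem X_mul_derivative_eq_mul_qLogDeriv (u : R⟦X⟧ˣ) :
    X * d⁄dX R (u : R⟦X⟧) = (u : R⟦X⟧) * qLogDeriv u := by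
  rw [qLogDeriv, ← mul_assoc, Units.mul_inv, one_mul]

theorem qLogDeriv_eq_of_X_mul_derivative {u : R⟦X⟧ˣ} {L : R⟦X⟧}
    (h : X * d⁄dX R (u : R⟦X⟧) = (u : R⟦X⟧) * L) : qLogDeriv u = L := by
  rw [qLogDeriv, h, ← mul_assoc, Units.inv_mul, one_mul]

theorem qLogDeriv_mul (u v : R⟦X⟧ˣ) : qLogDeriv (u * v) = qLogDeriv u + qLogDeriv v := by
  apply qLogDeriv_eq_of_X_mul_derivative
  simpa using X_mul_derivative_prod {0, 1} ![(u : R⟦X⟧), v] ![qLogDeriv u, qLogDeriv v] (by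
    simp [X_mul_derivative_eq_mul_qLogDeriv])

end CommSemiring

section CommRing

variable {R : Type*} [CommRing R]

theorem qLogDeriv_prod_zpow {ι : Type*} (s : Finset ι) (u : ι → R⟦X⟧ˣ) (e : ι → ℤ) :
    qLogDeriv (∏ i ∈ s, u i ^ e i) = ∑ i ∈ s, e i • qLogDeriv (u i) := by
  let φ : R⟦X⟧ˣ →* Multiplicative R⟦X⟧ :=
    MonoidHom.mk' (fun u => Multiplicative.ofAdd (qLogDeriv u)) qLogDeriv_mul
  change (φ (∏ i ∈ s, u i ^ e i)).toAdd = _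
  simp only [map_prod, map_zpow, toAdd_prod, toAdd_zpow]
  rfl

theorem X_mul_derivative_one_sub_X_pow (d : ℕ) :
    X * d⁄dX R (1 - X ^ d : R⟦X⟧) =
      (1 - X ^ d) * -mk fun n => if d ∣ n ∧ n ≠ 0 then (d : R) else 0 := by
  ext n
  rw [coeff_X_mul_derivative, mul_neg, sub_mul, one_mul]
  simp only [map_neg, map_sub, coeff_X_pow_mul', coeff_mk, coeff_one, coeff_X_pow]
  rcases lt_trichotomy n d with hnd | rfl | hdn
  · rcases eq_or_ne n 0 with rfl | hn
    · simp [hnd.not_ge]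
    · have : ¬d ∣ n := fun h => (Nat.le_of_dvd (Nat.pos_of_ne_zero hn) h).not_gt hnd
      simp [this, hn, hnd.ne, hnd.not_ge]
  · rcases eq_or_ne n 0 with rfl | hn <;> simp [*]
  · simp [hdn.ne', hdn.le, hdn.not_ge, Nat.sub_eq_zero_iff_le, (Nat.zero_le d).trans_lt hdn |>.ne']

end CommRing

end PowerSeries

noncomputable def etaPartial (j M : ℕ) : ℤ⟦X⟧ := ∏ n ∈ Icc 1 M, (1 - X ^ (j * n))

theorem X_pow_dvd_etaPartial_sub {j m M : ℕ} (hj : 0 < j) (hmM : m ≤ M) :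
    X ^ (m + 1) ∣ etaPartial j M - etaPartial j m := by
  induction M, hmM using Nat.le_induction with
  | base => simp
  | succ M hmM ih =>
    have hX : X ^ (m + 1) ∣ (X : ℤ⟦X⟧) ^ (j * (M + 1)) := pow_dvd_pow _ (by nlinarith)
    rw [etaPartial, prod_Icc_succ_top (by omega), ← etaPartial]
    convert dvd_sub ih (dvd_mul_of_dvd_right hX (etaPartial j M)) using 1
    ring

theorem X_pow_dvd_etaF_sub_etaPartial {j : ℕ} (hj : 0 < j) (M : ℕ) :
    X ^ (M + 1) ∣ etaF j - etaPartial j M := by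
  rw [X_pow_dvd_iff]
  intro m hm
  have := X_pow_dvd_iff.mp (X_pow_dvd_etaPartial_sub hj (Nat.lt_succ_iff.mp hm)) m m.lt_succ_self
  rwa [map_sub, etaF, coeff_mk, ← etaPartial, sub_eq_zero, eq_comm, ← sub_eq_zero, ← map_sub]

noncomputable def divisorSumSeries (j : ℕ) : ℤ⟦X⟧ :=
  mk fun m => ∑ d ∈ m.divisors with j ∣ d, (d : ℤ)

theorem sum_Icc_mul_dvd_eq_sum_divisors {j k M : ℕ} (hj : 0 < j) (hk : k ≤ M) :
    ∑ n ∈ Icc 1 M, (if j * n ∣ k ∧ k ≠ 0 then ((j * n : ℕ) : ℤ) else 0) =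
      ∑ d ∈ k.divisors with j ∣ d, (d : ℤ) := by
  rw [← sum_filter]
  refine sum_nbij (j * ·) ?_ ?_ ?_ fun _ _ => rfl
  · intro n hn
    simp only [mem_Icc, mem_filter, Nat.mem_divisors] at hn ⊢
    exact ⟨hn.2, dvd_mul_right j n⟩
  · exact fun a _ b _ h => Nat.eq_of_mul_eq_mul_left hj h
  · rintro d hd
    simp only [coe_filter, Nat.mem_divisors, Set.mem_ofPred_eq] at hd
    obtain ⟨⟨hdk, hk0⟩, c, rfl⟩ := hd
    have hc : j * c ≤ k := Nat.le_of_dvd (Nat.pos_of_ne_zero hk0) hdk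
    have hc0 : c ≠ 0 := by rintro rfl; simp at hdk; exact hk0 hdk
    refine ⟨c, ?_, rfl⟩
    simp only [coe_filter, mem_Icc, Set.mem_ofPred_eq]
    exact ⟨⟨Nat.one_le_iff_ne_zero.mpr hc0, by nlinarith⟩, hdk, hk0⟩

theorem X_mul_derivative_etaF {j : ℕ} (hj : 0 < j) :
    X * d⁄dX ℤ (etaF j) = etaF j * -divisorSumSeries j := by
  ext m
  suffices X ^ (m + 1) ∣ X * d⁄dX ℤ (etaF j) - etaF j * -divisorSumSeries j by
    have hm := X_pow_dvd_iff.mp this m m.lt_succ_self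
    rwa [map_sub, sub_eq_zero] at hm
  set P := etaPartial j m
  set T : ℤ⟦X⟧ := ∑ n ∈ Icc 1 m, mk fun k => if j * n ∣ k ∧ k ≠ 0 then ((j * n : ℕ) : ℤ) else 0
  have hP : X * d⁄dX ℤ P = P * -T := by
    rw [← sum_neg_distrib]
    exact X_mul_derivative_prod (Icc 1 m) (fun n => 1 - X ^ (j * n)) _
      fun n _ => X_mul_derivative_one_sub_X_pow (j * n)
  have hPF := X_pow_dvd_etaF_sub_etaPartial hj m
  have hT : X ^ (m + 1) ∣ T - divisorSumSeries j := by
    rw [X_pow_dvd_iff]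
    intro k hk
    simp only [T, map_sub, map_sum, coeff_mk, divisorSumSeries]
    rw [sum_Icc_mul_dvd_eq_sum_divisors hj (Nat.lt_succ_iff.mp hk), sub_self]
  have key : X * d⁄dX ℤ (etaF j) - etaF j * -divisorSumSeries j =
      X * d⁄dX ℤ (etaF j - P) - (etaF j - P) * -T - etaF j * (T - divisorSumSeries j) := by
    rw [map_sub, mul_sub, hP]
    ring
  rw [key]
  exact dvd_sub (dvd_sub (X_pow_dvd_X_mul_derivative hPF) (dvd_mul_of_dvd_left hPF _))
    (dvd_mul_of_dvd_right hT _)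

theorem qLogDeriv_etaU (j : ℕ) : qLogDeriv (etaU j) = -divisorSumSeries j := by
  rcases j.eq_zero_or_pos with rfl | hj
  · have hη : etaF 0 = 1 := by
      ext (_ | N)
      · simp [etaF]
      · rw [etaF, coeff_mk, prod_eq_zero (i := 1) (by simp) (by simp)]
        simp
    have hD : divisorSumSeries 0 = 0 := by
      ext m
      rw [divisorSumSeries, coeff_mk, map_zero]
      exact sum_eq_zero fun d hd => by rw [zero_dvd_iff.mp (mem_filter.1 hd).2, Nat.cast_zero]
    rw [hD, neg_zero]
    exact qLogDeriv_eq_of_X_mul_derivative (by simp [hη])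
  · exact qLogDeriv_eq_of_X_mul_derivative (by rw [etaU_val]; exact X_mul_derivative_etaF hj)

theorem coeff_qLogDeriv_etaQuotient (S : Finset ℕ) (e : ℕ → ℤ) (s : ℕ) :
    coeff s (qLogDeriv (∏ j ∈ S, etaU j ^ e j)) =
      -∑ j ∈ S, e j * ∑ d ∈ s.divisors with j ∣ d, (d : ℤ) := by
  simp only [qLogDeriv_prod_zpow, qLogDeriv_etaU, divisorSumSeries, map_sum, map_zsmul, map_neg,
    coeff_mk, smul_neg, smul_eq_mul, sum_neg_distrib]

theorem odd_coeff_qLogDeriv_etaQuotient_iff {S : Finset ℕ} {e : ℕ → ℤ} (h1 : 1 ∈ S)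
    (h1odd : Odd (e 1)) (heven : ∀ j ∈ S, 1 < j → Odd j → Even (e j)) (s : ℕ) :
    Odd (coeff s (qLogDeriv (∏ j ∈ S, etaU j ^ e j))) ↔ s ∈ SSq := by
  rw [← odd_sigma_one_iff_mem_SSq, ← ZMod.intCast_eq_one_iff_odd, ← ZMod.natCast_eq_one_iff_odd,
    coeff_qLogDeriv_etaQuotient]
  push_cast
  rw [ZMod.neg_eq_self_mod_two, sum_eq_single 1]
  · simp [ZMod.intCast_eq_one_iff_odd.mpr h1odd, ArithmeticFunction.sigma_one_apply]
  · intro j hj hj1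
    rcases Nat.even_or_odd j with hje | hjo
    · refine mul_eq_zero_of_right _ (sum_eq_zero fun d hd => ?_)
      exact ZMod.natCast_eq_zero_iff_even.mpr
        (even_iff_two_dvd.mpr (hje.two_dvd.trans (mem_filter.1 hd).2))
    · have : 1 < j := lt_of_le_of_ne hjo.pos hj1.symm
      rw [ZMod.intCast_eq_zero_iff_even.mpr (heven j hj this hjo), zero_mul]
  · exact fun h => (h h1).elim

theorem PowerSeries.natCast_ncard_oddPairs_eq_mul_coeff (u : ℤ⟦X⟧ˣ) (T : Set ℕ)
    (hT : ∀ s, Odd (coeff s (qLogDeriv u)) ↔ s ∈ T) (N : ℕ) :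
    (({p : ℕ × ℕ | Odd (coeff p.1 (u : ℤ⟦X⟧)) ∧ p.2 ∈ T ∧ p.1 + p.2 = N}.ncard : ℕ) : ZMod 2) =
      N * ((coeff N (u : ℤ⟦X⟧) : ℤ) : ZMod 2) := by
  classical
  have hset : {p : ℕ × ℕ | Odd (coeff p.1 (u : ℤ⟦X⟧)) ∧ p.2 ∈ T ∧ p.1 + p.2 = N} =
      ↑{p ∈ antidiagonal N | Odd (coeff p.1 (u : ℤ⟦X⟧)) ∧ p.2 ∈ T} := by
    ext p
    simp [and_comm, and_assoc]
  have hN := congrArg (fun f : ℤ⟦X⟧ => ((coeff N f : ℤ) : ZMod 2))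
    (X_mul_derivative_eq_mul_qLogDeriv u)
  rw [coeff_X_mul_derivative, coeff_mul] at hN
  push_cast at hN
  rw [hset, Set.ncard_coe_finset, card_eq_sum_ones, sum_filter, Nat.cast_sum, hN]
  refine sum_congr rfl fun p _ => ?_
  rw [← hT]
  rcases Int.even_or_odd (coeff p.1 (u : ℤ⟦X⟧)) with ha | ha <;>
    rcases Int.even_or_odd (coeff p.2 (qLogDeriv u)) with hc | hc <;>
    simp [ha, hc, ZMod.intCast_eq_zero_iff_even.mpr, ZMod.intCast_eq_one_iff_odd.mpr,
      Int.not_odd_iff_even.mpr]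

theorem stmt2_general (S : Finset ℕ) (e : ℕ → ℤ)
    (h1 : 1 ∈ S) (h1odd : Odd (e 1))
    (heven : ∀ j ∈ S, 1 < j → Odd j → Even (e j))
    (A : PowerSeries ℤ)
    (hA : A = ↑(∏ j ∈ S, (etaU j) ^ (e j))) :
    (∀ N : ℕ,
      (Even (PowerSeries.coeff N A) ∨ (Even N ∧ Odd (PowerSeries.coeff N A))) →
      Even (Set.ncard
        {p : ℕ × ℕ | Odd (PowerSeries.coeff p.1 A) ∧ p.2 ∈ SSq ∧ p.1 + p.2 = N})) ∧
    (∀ N : ℕ, Odd N → Odd (PowerSeries.coeff N A) →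
      Odd (Set.ncard
        {p : ℕ × ℕ | Odd (PowerSeries.coeff p.1 A) ∧ p.2 ∈ SSq ∧ p.1 + p.2 = N})) := by
  subst hA
  have hcount := natCast_ncard_oddPairs_eq_mul_coeff _ SSq
    (odd_coeff_qLogDeriv_etaQuotient_iff h1 h1odd heven)
  refine ⟨fun N hN => ?_, fun N hN hAN => ?_⟩
  · rw [← ZMod.natCast_eq_zero_iff_even, hcount]
    rcases hN with hAN | ⟨hN, -⟩
    · rw [ZMod.intCast_eq_zero_iff_even.mpr hAN, mul_zero]
    · rw [ZMod.natCast_eq_zero_iff_even.mpr hN, zero_mul]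
  · rw [← ZMod.natCast_eq_one_iff_odd, hcount, ZMod.natCast_eq_one_iff_odd.mpr hN,
      ZMod.intCast_eq_one_iff_odd.mpr hAN, one_mul]

theorem stmt2 (S : Finset ℕ) (hpos : ∀ j ∈ S, 0 < j) (e : ℕ → ℤ)
    (h1 : 1 ∈ S) (h1odd : Odd (e 1))
    (heven : ∀ j ∈ S, 1 < j → Odd j → Even (e j))
    (A : PowerSeries ℤ)
    (hA : A = ↑(∏ j ∈ S, (etaU j) ^ (e j))) :
    (∀ N : ℕ,
      (Even (PowerSeries.coeff N A) ∨ (Even N ∧ Odd (PowerSeries.coeff N A))) →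
      Even (Set.ncard
        {p : ℕ × ℕ | Odd (PowerSeries.coeff p.1 A) ∧ p.2 ∈ SSq ∧ p.1 + p.2 = N})) ∧
    (∀ N : ℕ, Odd N → Odd (PowerSeries.coeff N A) →
      Odd (Set.ncard
        {p : ℕ × ℕ | Odd (PowerSeries.coeff p.1 A) ∧ p.2 ∈ SSq ∧ p.1 + p.2 = N})) :=
  stmt2_general S e h1 h1odd heven A hA
end

section
/- Every coefficient of the formal power series f_3 · (f_1^3)^{-1} − (2·f_1^3 · f_3^{-1} − 1) in ℤ⟦q⟧ is divisible by 9; that is, f_3/f_1^3 ≡ 2·f_1^3/f_3 − 1 (mod 9) coefficientwise. -/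
/-!
Since `(1 - y)^3 = (1 - y^3) + 3 (y - y^2)`, the factors of `f_1^3` and `f_3` agree mod 3, so
`3 ∣ f_3 - f_1^3`; the infinite products are handled through their truncations, which determine
every coefficient. With `A = f_1^3` and `B = f_3`, the difference to be shown divisible by 9 is
`B/A - 2A/B + 1 = (B - A)(B + 2A)/(AB)`, and both `B - A` and `B + 2A = (B - A) + 3A` are
divisible by 3.
-/

open PowerSeries Finset

theorem Finset.dvd_prod_sub_prod {ι R : Type*} [CommRing R] (s : Finset ι) {c : R}
    {f g : ι → R} (h : ∀ i ∈ s, c ∣ f i - g i) : c ∣ ∏ i ∈ s, f i - ∏ i ∈ s, g i := by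
  simp_rw [← Ideal.mem_span_singleton, ← Ideal.Quotient.eq, map_prod] at h ⊢
  exact prod_congr rfl h

namespace PowerSeries

theorem C_dvd_iff_dvd_coeff {R : Type*} [CommRing R] (r : R) (φ : R⟦X⟧) :
    C r ∣ φ ↔ ∀ n, r ∣ coeff n φ := by
  refine ⟨fun ⟨ψ, hψ⟩ n => ⟨coeff n ψ, by rw [hψ, coeff_C_mul]⟩, fun h => ?_⟩
  choose c hc using h
  exact ⟨mk c, ext fun n => by rw [coeff_C_mul, coeff_mk, hc]⟩

theorem X_pow_dvd_prod_one_sub_X_pow_sub_one {R : Type*} [CommRing R] {ι : Type*}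
    (s : Finset ι) (e : ι → ℕ) {m : ℕ} (he : ∀ i ∈ s, m < e i) :
    (X : R⟦X⟧) ^ (m + 1) ∣ ∏ i ∈ s, (1 - X ^ e i) - 1 := by
  have := dvd_prod_sub_prod s (c := (X : R⟦X⟧) ^ (m + 1)) (f := fun i => 1 - X ^ e i)
    (g := fun _ => 1) fun i hi => by
    rw [sub_sub_cancel_left, dvd_neg]
    exact pow_dvd_pow (X : R⟦X⟧) (he i hi)
  rwa [prod_const_one] at this

theorem coeff_eq_of_X_pow_dvd_sub {R : Type*} [CommRing R] {f g : R⟦X⟧} {N : ℕ}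
    (h : X ^ (N + 1) ∣ f - g) : coeff N f = coeff N g := by
  rw [← sub_eq_zero, ← map_sub]
  exact X_pow_dvd_iff.1 h N N.lt_succ_self

end PowerSeries

noncomputable def etaTrunc (j N : ℕ) : ℤ⟦X⟧ :=
  ∏ n ∈ Icc 1 N, (1 - X ^ (j * n))

lemma X_pow_dvd_etaTrunc_sub_etaTrunc {j : ℕ} (hj : 1 ≤ j) {m N : ℕ} (hmN : m ≤ N) :
    X ^ (m + 1) ∣ etaTrunc j N - etaTrunc j m := by
  have hsplit : etaTrunc j N = etaTrunc j m * ∏ n ∈ Ioc m N, (1 - X ^ (j * n)) :=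
    (prod_Ioc_consecutive _ (Nat.zero_le m) hmN).symm
  rw [hsplit, ← mul_sub_one]
  refine dvd_mul_of_dvd_right (X_pow_dvd_prod_one_sub_X_pow_sub_one _ _ fun n hn => ?_) _
  exact (mem_Ioc.1 hn).1.trans_le (Nat.le_mul_of_pos_left n hj)

lemma X_pow_dvd_etaF_sub_etaTrunc {j : ℕ} (hj : 1 ≤ j) (N : ℕ) :
    X ^ (N + 1) ∣ etaF j - etaTrunc j N := by
  refine X_pow_dvd_iff.2 fun m hm => ?_
  rw [map_sub, sub_eq_zero, etaF, coeff_mk]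
  exact (coeff_eq_of_X_pow_dvd_sub
    (X_pow_dvd_etaTrunc_sub_etaTrunc hj (Nat.lt_succ_iff.1 hm))).symm

lemma three_dvd_etaTrunc_three_sub_pow (N : ℕ) :
    (3 : ℤ⟦X⟧) ∣ etaTrunc 3 N - etaTrunc 1 N ^ 3 := by
  rw [etaTrunc, etaTrunc, ← prod_pow]
  refine dvd_prod_sub_prod _ fun n _ => ⟨X ^ n - X ^ n * X ^ n, ?_⟩
  rw [one_mul, mul_comm, pow_mul]
  ring

lemma three_dvd_etaF_three_sub_pow : (3 : ℤ⟦X⟧) ∣ etaF 3 - etaF 1 ^ 3 := by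
  rw [← map_ofNat C 3, C_dvd_iff_dvd_coeff]
  intro N
  have htrunc : X ^ (N + 1) ∣ (etaF 3 - etaF 1 ^ 3) - (etaTrunc 3 N - etaTrunc 1 N ^ 3) := by
    rw [sub_sub_sub_comm]
    exact dvd_sub (X_pow_dvd_etaF_sub_etaTrunc (by norm_num) N)
      ((X_pow_dvd_etaF_sub_etaTrunc le_rfl N).trans (sub_dvd_pow_sub_pow _ _ 3))
  rw [coeff_eq_of_X_pow_dvd_sub htrunc]
  exact (C_dvd_iff_dvd_coeff 3 _).1 (by rw [map_ofNat]; exact three_dvd_etaTrunc_three_sub_pow N) N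

/-- `f_3/f_1^3 ≡ 2·f_1^3/f_3 - 1 (mod 9)` coefficientwise. -/
theorem stmt11 :
    ∀ N : ℕ, (9 : ℤ) ∣ PowerSeries.coeff N
      (etaF 3 * ↑((etaU 1) ^ 3)⁻¹ - (2 * (etaF 1) ^ 3 * ↑(etaU 3)⁻¹ - 1)) := by
  have hAu : etaF 1 ^ 3 * ↑((etaU 1) ^ 3)⁻¹ = 1 := by
    rw [← etaU_val, ← Units.val_pow_eq_pow_val, Units.mul_inv]
  have hBv : etaF 3 * ↑(etaU 3)⁻¹ = 1 := by rw [← etaU_val, Units.mul_inv]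
  set A := etaF 1 ^ 3
  set B := etaF 3
  set u : ℤ⟦X⟧ := ↑((etaU 1) ^ 3)⁻¹
  set v : ℤ⟦X⟧ := ↑(etaU 3)⁻¹
  have hBA : (3 : ℤ⟦X⟧) ∣ B - A := three_dvd_etaF_three_sub_pow
  have hfactor : B * u - (2 * A * v - 1) = (B - A) * (B - A + 3 * A) * (u * v) := by
    linear_combination (-(B * u) - A * u) * hBv + (2 * A * v - 1) * hAu
  have h9 : C (9 : ℤ) ∣ B * u - (2 * A * v - 1) := by
    rw [hfactor, map_ofNat, show (9 : ℤ⟦X⟧) = 3 * 3 by norm_num]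
    exact dvd_mul_of_dvd_left (mul_dvd_mul hBA (dvd_add hBA (dvd_mul_right 3 A))) _
  exact (C_dvd_iff_dvd_coeff 9 _).1 h9
end
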